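/- Let A, B, X, Y be jointly distributed random variables with finite ranges. If I(X:Y | A) = 0 and H(A | X,Y) = 0, then H(A | B,X) + H(A | B,Y) ≤ H(A | B). -/

import Mathlib

open Finset

noncomputable section

/-- Probability of an event under a distribution on a finite sample space. -/
def pr {Ω : Type*} [Fintype Ω] (p : Ω → ℝ) (E : Set Ω) : ℝ :=
  ∑ ω, E.indicator p ω

/-- `p` is a probability mass function on the finite sample space `Ω`. -/
def IsPMF {Ω : Type*} [Fintype Ω] (p : Ω → ℝ) : Prop :=
  (∀ ω, 0 ≤ p ω) ∧ ∑ ω, p ω = 1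

/-- Shannon entropy (base 2) of a random variable `V` on a finite sample space. -/
def ent {Ω β : Type*} [Fintype Ω] [Fintype β] (p : Ω → ℝ) (V : Ω → β) : ℝ :=
  -∑ v, pr p {ω | V ω = v} * Real.logb 2 (pr p {ω | V ω = v})

/-- Conditional Shannon entropy (base 2): `H(V | W)`. -/
def condEnt {Ω β γ : Type*} [Fintype Ω] [Fintype β] [Fintype γ]
    (p : Ω → ℝ) (V : Ω → β) (W : Ω → γ) : ℝ :=
  ent p (fun ω => (V ω, W ω)) - ent p W

/-- Mutual information (base 2): `I(V : W)`. -/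
def mi {Ω β γ : Type*} [Fintype Ω] [Fintype β] [Fintype γ]
    (p : Ω → ℝ) (V : Ω → β) (W : Ω → γ) : ℝ :=
  ent p V + ent p W - ent p (fun ω => (V ω, W ω))

/-- Conditional mutual information (base 2): `I(V : W | U)`. -/
def cmi {Ω β γ δ : Type*} [Fintype Ω] [Fintype β] [Fintype γ] [Fintype δ]
    (p : Ω → ℝ) (V : Ω → β) (W : Ω → γ) (U : Ω → δ) : ℝ :=
  ent p (fun ω => (V ω, U ω)) + ent p (fun ω => (W ω, U ω))
    - ent p (fun ω => (V ω, W ω, U ω)) - ent p U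

end

/-!
Write `S a` and `T a` for the supports of `X` and `Y` given `A = a`. Since `X` and `Y` are
independent given `A`, every point of `S a × T a` carries positive mass together with `A = a`;
since `A` is a function of `(X, Y)`, the rectangles `S a × T a` are therefore pairwise disjoint.

Coarsening `X` to the events `X ∈ S A` can only increase the uncertainty about `A`:
`H(A | B, X) ≤ E[-log P(A | B, X ∈ S A)]`, by Gibbs' inequality against the sub-probability
`P(a, b) P(b, x) [x ∈ S a] / P(b, X ∈ S a)`; likewise for `Y`. Disjointness of the rectangles gives
`∑ a, P(b, X ∈ S a) P(b, Y ∈ T a) ≤ P(b)²`, so Gibbs' inequality against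
`P(b, X ∈ S a) P(b, Y ∈ T a) / P(b)` bounds the sum of the two coarsened entropies by `H(A | B)`.
-/

open Real

section

variable {Ω β γ : Type*} [Fintype Ω] {p : Ω → ℝ}

noncomputable def law (p : Ω → ℝ) (V : Ω → β) (v : β) : ℝ := pr p {ω | V ω = v}

lemma pr_nonneg (hp : 0 ≤ p) (E : Set Ω) : 0 ≤ pr p E :=
  sum_nonneg fun ω _ => Set.indicator_nonneg (fun ω _ => hp ω) ω

lemma pr_mono (hp : 0 ≤ p) {E F : Set Ω} (h : E ⊆ F) : pr p E ≤ pr p F :=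
  sum_le_sum fun ω _ => Set.indicator_le_indicator_of_subset h hp ω

lemma le_pr (hp : 0 ≤ p) {E : Set Ω} {ω : Ω} (hω : ω ∈ E) : p ω ≤ pr p E := by
  have := single_le_sum (f := E.indicator p)
    (fun ω _ => Set.indicator_nonneg (fun ω _ => hp ω) ω) (mem_univ ω)
  rwa [Set.indicator_of_mem hω] at this

lemma exists_pos_of_pr_pos {E : Set Ω} (h : 0 < pr p E) : ∃ ω ∈ E, 0 < p ω := by
  obtain ⟨ω, -, hω⟩ := exists_lt_of_sum_lt (f := fun _ => (0 : ℝ)) (by simpa [pr] using h)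
  by_cases hE : ω ∈ E
  · exact ⟨ω, hE, by rwa [Set.indicator_of_mem hE] at hω⟩
  · simp [Set.indicator_of_notMem hE] at hω

lemma pr_union_of_disjoint {E F : Set Ω} (h : Disjoint E F) : pr p (E ∪ F) = pr p E + pr p F := by
  simp only [pr, Set.indicator_union_of_disjoint h, sum_add_distrib]

lemma law_pos (hp : 0 ≤ p) (V : Ω → β) {ω : Ω} (hω : 0 < p ω) : 0 < law p V (V ω) :=
  hω.trans_le (le_pr hp rfl)

lemma law_congr {V : Ω → β} {W : Ω → γ} {v : β} {w : γ} (h : ∀ ω, V ω = v ↔ W ω = w) :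
    law p V v = law p W w := by
  simp only [law, h]

lemma law_mono (hp : 0 ≤ p) {V : Ω → β} {W : Ω → γ} {v : β} {w : γ}
    (h : ∀ ω, V ω = v → W ω = w) : law p V v ≤ law p W w :=
  pr_mono hp fun ω => h ω

lemma sum_law_mul [Fintype β] (V : Ω → β) (g : β → ℝ) :
    ∑ v, law p V v * g v = ∑ ω, p ω * g (V ω) := by
  simp only [law, pr, sum_mul]
  rw [sum_comm]
  refine sum_congr rfl fun ω _ => ?_
  rw [sum_eq_single (V ω) (fun v _ hv => by simp [hv.symm]) (by simp)]
  simp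

lemma sum_law [Fintype β] (hp : IsPMF p) (V : Ω → β) : ∑ v, law p V v = 1 := by
  simpa [hp.2] using sum_law_mul (p := p) V (fun _ => 1)

lemma pr_preimage [Fintype β] (V : Ω → β) (T : Set β) :
    pr p (V ⁻¹' T) = ∑ v, T.indicator (law p V) v := by
  classical
  have key := sum_law_mul (p := p) V (T.indicator 1)
  simp only [Set.indicator_apply, Pi.one_apply, mul_ite, mul_one, mul_zero] at key
  simp only [pr, Set.indicator_apply, key, Set.mem_preimage]

lemma sum_indicator_law_prod [Fintype β] [Fintype γ] (V : Ω → β) (W : Ω → γ) (v : β)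
    (S : Set γ) :
    ∑ w, S.indicator (fun w => law p (fun ω => (V ω, W ω)) (v, w)) w
      = pr p {ω | V ω = v ∧ W ω ∈ S} := by
  classical
  rw [show {ω | V ω = v ∧ W ω ∈ S} = (fun ω => (V ω, W ω)) ⁻¹' ({v} ×ˢ S) by ext; simp,
    pr_preimage, Fintype.sum_prod_type, sum_eq_single v (fun b _ hb => by simp [hb]) (by simp)]
  simp [Set.indicator_apply]

lemma sum_law_prod [Fintype β] [Fintype γ] (V : Ω → β) (W : Ω → γ) (v : β) :
    ∑ w, law p (fun ω => (V ω, W ω)) (v, w) = law p V v := by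
  simpa [law] using sum_indicator_law_prod (p := p) V W v Set.univ

lemma sum_law_prod_left [Fintype β] [Fintype γ] (V : Ω → β) (W : Ω → γ) (w : γ) :
    ∑ v, law p (fun ω => (V ω, W ω)) (v, w) = law p W w := by
  rw [← sum_law_prod W V w]
  exact sum_congr rfl fun v _ => law_congr fun ω => by simp [and_comm]

lemma sum_mul_congr_of_pos (hp : 0 ≤ p) {f g : Ω → ℝ} (h : ∀ ω, 0 < p ω → f ω = g ω) :
    ∑ ω, p ω * f ω = ∑ ω, p ω * g ω := by
  refine sum_congr rfl fun ω _ => ?_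
  rcases (show 0 ≤ p ω from hp ω).eq_or_lt with hω | hω
  · rw [← hω, zero_mul, zero_mul]
  · rw [h ω hω]

lemma ent_eq_sum [Fintype β] (V : Ω → β) :
    ent p V = -∑ ω, p ω * logb 2 (law p V (V ω)) := by
  rw [ent, ← sum_law_mul V (fun v => logb 2 (law p V v))]
  rfl

lemma condEnt_eq_sum [Fintype β] [Fintype γ] (V : Ω → β) (W : Ω → γ) :
    condEnt p V W = ∑ ω, p ω * (logb 2 (law p W (W ω))
      - logb 2 (law p (fun ω => (V ω, W ω)) (V ω, W ω))) := by
  rw [condEnt, ent_eq_sum, ent_eq_sum]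
  simp only [mul_sub, sum_sub_distrib]
  ring

lemma cmi_eq_sum [Fintype β] [Fintype γ] {δ : Type*} [Fintype δ] (V : Ω → β) (W : Ω → γ)
    (U : Ω → δ) :
    cmi p V W U = ∑ ω, p ω * (logb 2 (law p (fun ω => (V ω, W ω, U ω)) (V ω, W ω, U ω))
      + logb 2 (law p U (U ω)) - logb 2 (law p (fun ω => (V ω, U ω)) (V ω, U ω))
      - logb 2 (law p (fun ω => (W ω, U ω)) (W ω, U ω))) := by
  rw [cmi, ent_eq_sum, ent_eq_sum, ent_eq_sum, ent_eq_sum]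
  simp only [mul_add, mul_sub, sum_add_distrib, sum_sub_distrib]
  ring

lemma mul_logb_div_le {P Q : ℝ} (hP : 0 ≤ P) (hQ : 0 ≤ Q) (hPQ : 0 < P → 0 < Q) :
    P * logb 2 (Q / P) ≤ (Q - P) / log 2 := by
  rcases hP.eq_or_lt with rfl | hP
  · simpa using div_nonneg hQ (log_nonneg one_le_two)
  have hlog := log_le_sub_one_of_pos (div_pos (hPQ hP) hP)
  rw [logb, ← mul_div_assoc]
  gcongr
  calc P * log (Q / P) ≤ P * (Q / P - 1) := by gcongr
    _ = Q - P := by field_simp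

lemma sum_mul_logb_div_law_nonpos [Fintype β] (hp : IsPMF p) (V : Ω → β) (g : β → ℝ)
    (hg : 0 ≤ g) (hgV : ∀ ω, 0 < p ω → 0 < g (V ω)) (hg1 : ∑ v, g v ≤ 1) :
    ∑ ω, p ω * logb 2 (g (V ω) / law p V (V ω)) ≤ 0 := by
  rw [← sum_law_mul V (fun v => logb 2 (g v / law p V v))]
  have hsupp : ∀ v, 0 < law p V v → 0 < g v := fun v hv => by
    obtain ⟨ω, rfl, hω⟩ := exists_pos_of_pr_pos hv
    exact hgV ω hω
  calc ∑ v, law p V v * logb 2 (g v / law p V v)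
      ≤ ∑ v, (g v - law p V v) / log 2 :=
        sum_le_sum fun v _ => mul_logb_div_le (pr_nonneg hp.1 _) (hg v) (hsupp v)
    _ = (∑ v, g v - 1) / log 2 := by rw [← sum_div, sum_sub_distrib, sum_law hp]
    _ ≤ 0 := div_nonpos_of_nonpos_of_nonneg (by linarith) (log_nonneg one_le_two)

lemma pos_of_sum_mul_logb_div_eq_zero {ι : Type*} [Fintype ι] {P Q : ι → ℝ} (hP : 0 ≤ P)
    (hQ : 0 ≤ Q) (hPQ : ∀ i, 0 < P i → 0 < Q i) (hsum : ∑ i, Q i = ∑ i, P i)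
    (h : ∑ i, P i * logb 2 (Q i / P i) = 0) {i : ι} (hi : 0 < Q i) : 0 < P i := by
  have hterm : ∀ j, 0 ≤ (Q j - P j) / log 2 - P j * logb 2 (Q j / P j) := fun j =>
    sub_nonneg.2 (mul_logb_div_le (hP j) (hQ j) (hPQ j))
  have htight : ∑ j, ((Q j - P j) / log 2 - P j * logb 2 (Q j / P j)) = 0 := by
    rw [sum_sub_distrib, h, ← sum_div, sum_sub_distrib, hsum, sub_self, zero_div, sub_zero]
  have hzero := (sum_eq_zero_iff_of_nonneg fun j _ => hterm j).1 htight i (mem_univ _)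
  refine (show 0 ≤ P i from hP i).lt_of_ne' fun hPi => hi.ne' ?_
  rw [hPi, sub_zero, zero_mul, sub_zero] at hzero
  exact (div_eq_zero_iff.1 hzero).resolve_right (log_pos one_lt_two).ne'

section Support

variable [Fintype β] [Fintype γ] {V : Ω → β} {W : Ω → γ}

lemma law_prod_eq_of_condEnt_eq_zero (hp : 0 ≤ p) (h : condEnt p V W = 0) {v : β} {w : γ}
    (hvw : 0 < law p (fun ω => (V ω, W ω)) (v, w)) :
    law p (fun ω => (V ω, W ω)) (v, w) = law p W w := by
  set P := law p (fun ω => (V ω, W ω))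
  have hPW : ∀ x : β × γ, P x ≤ law p W x.2 := fun x => law_mono hp fun ω h => by rw [← h]
  have hterm : ∀ x : β × γ, 0 ≤ P x * (logb 2 (law p W x.2) - logb 2 (P x)) := by
    intro x
    have hx : 0 ≤ P x := pr_nonneg hp _
    rcases hx.eq_or_lt with hx | hx
    · rw [← hx, zero_mul]
    · exact mul_nonneg hx.le (sub_nonneg.2 (logb_le_logb_of_le one_lt_two hx (hPW x)))
  have hsum : ∑ x, P x * (logb 2 (law p W x.2) - logb 2 (P x)) = 0 := by
    rw [sum_law_mul, ← h, condEnt_eq_sum]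
  have hzero := (sum_eq_zero_iff_of_nonneg fun x _ => hterm x).1 hsum (v, w) (mem_univ _)
  rcases mul_eq_zero.1 hzero with h0 | h0
  · exact absurd h0 hvw.ne'
  · exact logb_injOn_pos one_lt_two hvw (hvw.trans_le (hPW (v, w))) (sub_eq_zero.1 h0).symm

lemma eq_of_condEnt_eq_zero (hp : 0 ≤ p) (h : condEnt p V W = 0) {v v' : β} {w : γ}
    (hv : 0 < law p (fun ω => (V ω, W ω)) (v, w))
    (hv' : 0 < law p (fun ω => (V ω, W ω)) (v', w)) : v = v' := by
  by_contra hne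
  have hdisj : Disjoint {ω | (V ω, W ω) = (v, w)} {ω | (V ω, W ω) = (v', w)} :=
    Set.disjoint_left.2 fun ω h h' => hne (congrArg Prod.fst (h.symm.trans h'))
  have hle : law p (fun ω => (V ω, W ω)) (v, w) + law p (fun ω => (V ω, W ω)) (v', w)
      ≤ law p W w := by
    rw [law, law, ← pr_union_of_disjoint hdisj]
    exact pr_mono hp fun ω h => by rcases h with h | h <;> exact congrArg Prod.snd h
  rw [law_prod_eq_of_condEnt_eq_zero hp h hv'] at hle
  linarith [law_prod_eq_of_condEnt_eq_zero hp h hv]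

lemma law_pos_of_cmi_eq_zero {δ : Type*} [Fintype δ] {U : Ω → δ} (hp : IsPMF p)
    (h : cmi p V W U = 0) {v : β} {w : γ} {u : δ}
    (hv : 0 < law p (fun ω => (V ω, U ω)) (v, u)) (hw : 0 < law p (fun ω => (W ω, U ω)) (w, u)) :
    0 < law p (fun ω => (V ω, W ω, U ω)) (v, w, u) := by
  -- `Q` makes `V` and `W` independent given `U`; `I(V:W|U) = 0` is equality in Gibbs' inequality
  -- between `P` and `Q`.
  set P := law p (fun ω => (V ω, W ω, U ω))
  set Q : β × γ × δ → ℝ := fun x => law p (fun ω => (V ω, U ω)) (x.1, x.2.2)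
    * law p (fun ω => (W ω, U ω)) (x.2.1, x.2.2) / law p U x.2.2
  have hPQ : ∀ x, 0 < P x → 0 < Q x := by
    intro x hx
    have hVU : P x ≤ law p (fun ω => (V ω, U ω)) (x.1, x.2.2) :=
      law_mono hp.1 fun ω h => by simp [← h]
    have hWU : P x ≤ law p (fun ω => (W ω, U ω)) (x.2.1, x.2.2) :=
      law_mono hp.1 fun ω h => by simp [← h]
    have hU : P x ≤ law p U x.2.2 := law_mono hp.1 fun ω h => by simp [← h]
    exact div_pos (mul_pos (hx.trans_le hVU) (hx.trans_le hWU)) (hx.trans_le hU)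
  have hQ1 : ∑ x, Q x = ∑ x, P x := calc
    ∑ x, Q x = ∑ u, (∑ v, law p (fun ω => (V ω, U ω)) (v, u))
        * (∑ w, law p (fun ω => (W ω, U ω)) (w, u)) / law p U u := by
      simp only [Fintype.sum_prod_type, Q, sum_mul_sum, sum_div]
      conv_rhs => rw [sum_comm]
      exact sum_congr rfl fun v _ => sum_comm
    _ = ∑ x, P x := by simp only [sum_law_prod_left, mul_self_div_self, sum_law hp, P]
  have hPQ0 : ∑ x, P x * logb 2 (Q x / P x) = 0 := by
    rw [sum_law_mul (fun ω => (V ω, W ω, U ω)) (fun x => logb 2 (Q x / P x)), ← neg_zero, ← h,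
      cmi_eq_sum, ← sum_neg_distrib]
    simp only [← mul_neg]
    refine sum_mul_congr_of_pos hp.1 fun ω hω => ?_
    have hVU : 0 < law p (fun ω => (V ω, U ω)) (V ω, U ω) := law_pos hp.1 _ hω
    have hWU : 0 < law p (fun ω => (W ω, U ω)) (W ω, U ω) := law_pos hp.1 _ hω
    have hU : 0 < law p U (U ω) := law_pos hp.1 _ hω
    have hVWU : 0 < P (V ω, W ω, U ω) := law_pos hp.1 _ hω
    dsimp only [Q]
    rw [logb_div (by positivity) hVWU.ne', logb_div (by positivity) hU.ne',
      logb_mul hVU.ne' hWU.ne']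
    ring
  have hQpos : 0 < Q (v, w, u) :=
    div_pos (mul_pos hv hw) (hv.trans_le (law_mono hp.1 fun ω h => congrArg Prod.snd h))
  exact pos_of_sum_mul_logb_div_eq_zero (fun _ => pr_nonneg hp.1 _)
    (fun _ => div_nonneg (mul_nonneg (pr_nonneg hp.1 _) (pr_nonneg hp.1 _)) (pr_nonneg hp.1 _))
    hPQ hQ1 hPQ0 hQpos

end Support

lemma support_rectangles_disjoint {α χ υ : Type*} [Fintype α] [Fintype χ] [Fintype υ]
    {A : Ω → α} {X : Ω → χ} {Y : Ω → υ} (hp : IsPMF p) (h1 : cmi p X Y A = 0)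
    (h2 : condEnt p A (fun ω => (X ω, Y ω)) = 0) {a a' : α} {x : χ} {y : υ}
    (hx : 0 < law p (fun ω => (X ω, A ω)) (x, a)) (hy : 0 < law p (fun ω => (Y ω, A ω)) (y, a))
    (hx' : 0 < law p (fun ω => (X ω, A ω)) (x, a'))
    (hy' : 0 < law p (fun ω => (Y ω, A ω)) (y, a')) : a = a' := by
  have hjoint : ∀ {a}, 0 < law p (fun ω => (X ω, A ω)) (x, a) →
      0 < law p (fun ω => (Y ω, A ω)) (y, a) →
      0 < law p (fun ω => (A ω, X ω, Y ω)) (a, x, y) := fun hx hy => by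
    rw [law_congr (W := fun ω => (X ω, Y ω, A ω)) (w := (x, y, _)) fun ω => by
      simp only [Prod.mk.injEq]; tauto]
    exact law_pos_of_cmi_eq_zero hp h1 hx hy
  exact eq_of_condEnt_eq_zero hp.1 h2 (hjoint hx hy) (hjoint hx' hy')

lemma sum_mul_sum_indicator_le {ι κ μ : Type*} [Fintype ι] [Fintype κ] [Fintype μ]
    {f : κ → ℝ} {g : μ → ℝ} (hf : 0 ≤ f) (hg : 0 ≤ g) {S : ι → Set κ} {T : ι → Set μ}
    (hST : ∀ i j x y, x ∈ S i → y ∈ T i → x ∈ S j → y ∈ T j → i = j) :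
    ∑ i, (∑ x, (S i).indicator f x) * (∑ y, (T i).indicator g y) ≤ (∑ x, f x) * ∑ y, g y := by
  simp only [sum_mul_sum]
  rw [sum_comm]
  refine sum_le_sum fun x _ => ?_
  rw [sum_comm]
  refine sum_le_sum fun y _ => ?_
  have hvanish : ∀ i, ¬(x ∈ S i ∧ y ∈ T i) → (S i).indicator f x * (T i).indicator g y = 0 := by
    intro i hi
    by_cases hx : x ∈ S i
    · rw [Set.indicator_of_notMem fun hy => hi ⟨hx, hy⟩, mul_zero]
    · rw [Set.indicator_of_notMem hx, zero_mul]
  by_cases hex : ∃ i, x ∈ S i ∧ y ∈ T i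
  · obtain ⟨i, hx, hy⟩ := hex
    rw [sum_eq_single i (fun j _ hj => hvanish j fun h => hj (hST _ _ _ _ hx hy h.1 h.2).symm)
      (by simp), Set.indicator_of_mem hx, Set.indicator_of_mem hy]
  · rw [sum_eq_zero fun i _ => hvanish i fun h => hex ⟨i, h⟩]
    exact mul_nonneg (hf x) (hg y)

/-- When `S a` contains the support of `X` given `A = a`, this is `E[-log₂ P(A | B, X ∈ S A)]`. -/
noncomputable def coverEnt {α χ : Type*} (p : Ω → ℝ) (A : Ω → α) (B : Ω → β) (X : Ω → χ)
    (S : α → Set χ) : ℝ :=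
  ∑ ω, p ω * logb 2
    (pr p {ω' | B ω' = B ω ∧ X ω' ∈ S (A ω)} / law p (fun ω => (A ω, B ω)) (A ω, B ω))

section Cover

variable {α χ υ : Type*} [Fintype α] [Fintype β] [Fintype χ] [Fintype υ]
  {A : Ω → α} {B : Ω → β} {X : Ω → χ} {Y : Ω → υ}

lemma sum_pr_mul_pr_le (hp : 0 ≤ p) {S : α → Set χ} {T : α → Set υ}
    (hST : ∀ a a' x y, x ∈ S a → y ∈ T a → x ∈ S a' → y ∈ T a' → a = a') (b : β) :
    ∑ a, pr p {ω | B ω = b ∧ X ω ∈ S a} * pr p {ω | B ω = b ∧ Y ω ∈ T a}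
      ≤ law p B b * law p B b := calc
  _ ≤ (∑ x, law p (fun ω => (B ω, X ω)) (b, x)) * ∑ y, law p (fun ω => (B ω, Y ω)) (b, y) := by
    simp only [← sum_indicator_law_prod]
    exact sum_mul_sum_indicator_le (fun _ => pr_nonneg hp _) (fun _ => pr_nonneg hp _) hST
  _ = law p B b * law p B b := by rw [sum_law_prod, sum_law_prod]

lemma condEnt_prod_le_coverEnt (hp : IsPMF p) {S : α → Set χ}
    (hS : ∀ ω, 0 < p ω → X ω ∈ S (A ω)) :
    condEnt p A (fun ω => (B ω, X ω)) ≤ coverEnt p A B X S := by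
  set cover : α → β → ℝ := fun a b => pr p {ω' | B ω' = b ∧ X ω' ∈ S a}
  set g : α × β × χ → ℝ := fun v =>
    (S v.1).indicator (fun x => law p (fun ω => (B ω, X ω)) (v.2.1, x)) v.2.2
      * (law p (fun ω => (A ω, B ω)) (v.1, v.2.1) / cover v.1 v.2.1)
  have hg : ∀ v, 0 ≤ g v := fun v => mul_nonneg (Set.indicator_nonneg (fun _ _ => pr_nonneg hp.1 _) _)
    (div_nonneg (pr_nonneg hp.1 _) (pr_nonneg hp.1 _))
  have hg1 : ∑ v, g v ≤ 1 := calc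
    ∑ v, g v = ∑ a, ∑ b, cover a b * (law p (fun ω => (A ω, B ω)) (a, b) / cover a b) := by
      simp only [Fintype.sum_prod_type, g, ← sum_mul, sum_indicator_law_prod, cover]
    _ ≤ ∑ a, ∑ b, law p (fun ω => (A ω, B ω)) (a, b) := by
      refine sum_le_sum fun a _ => sum_le_sum fun b _ => ?_
      rw [mul_div_left_comm]
      exact mul_le_of_le_one_right (pr_nonneg hp.1 _) (div_self_le_one _)
    _ = 1 := by rw [← Fintype.sum_prod_type', sum_law hp]
  have hgV : ∀ ω, 0 < p ω → 0 < g (A ω, B ω, X ω) := by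
    intro ω hω
    have hcover : 0 < cover (A ω) (B ω) := hω.trans_le (le_pr hp.1 ⟨rfl, hS ω hω⟩)
    simp only [g, Set.indicator_of_mem (hS ω hω)]
    exact mul_pos (law_pos hp.1 _ hω) (div_pos (law_pos hp.1 _ hω) hcover)
  have hgibbs := sum_mul_logb_div_law_nonpos hp (fun ω => (A ω, B ω, X ω)) g hg hgV hg1
  suffices h : condEnt p A (fun ω => (B ω, X ω)) - coverEnt p A B X S
      = ∑ ω, p ω * logb 2 (g (A ω, B ω, X ω) / law p (fun ω => (A ω, B ω, X ω)) (A ω, B ω, X ω)) by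
    linarith
  rw [condEnt_eq_sum, coverEnt, ← sum_sub_distrib]
  simp only [← mul_sub]
  refine sum_mul_congr_of_pos hp.1 fun ω hω => ?_
  have hcover : 0 < cover (A ω) (B ω) := hω.trans_le (le_pr hp.1 ⟨rfl, hS ω hω⟩)
  have hBX : 0 < law p (fun ω => (B ω, X ω)) (B ω, X ω) := law_pos hp.1 _ hω
  have hAB : 0 < law p (fun ω => (A ω, B ω)) (A ω, B ω) := law_pos hp.1 _ hω
  have hABX : 0 < law p (fun ω => (A ω, B ω, X ω)) (A ω, B ω, X ω) := law_pos hp.1 _ hω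
  simp only [g, Set.indicator_of_mem (hS ω hω)]
  rw [logb_div (by positivity) hABX.ne', logb_mul hBX.ne' (by positivity),
    logb_div hAB.ne' hcover.ne', logb_div hcover.ne' hAB.ne']
  ring

lemma coverEnt_add_coverEnt_le_condEnt (hp : IsPMF p) {S : α → Set χ} {T : α → Set υ}
    (hS : ∀ ω, 0 < p ω → X ω ∈ S (A ω)) (hT : ∀ ω, 0 < p ω → Y ω ∈ T (A ω))
    (hST : ∀ a a' x y, x ∈ S a → y ∈ T a → x ∈ S a' → y ∈ T a' → a = a') :
    coverEnt p A B X S + coverEnt p A B Y T ≤ condEnt p A B := by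
  set coverS : α → β → ℝ := fun a b => pr p {ω' | B ω' = b ∧ X ω' ∈ S a}
  set coverT : α → β → ℝ := fun a b => pr p {ω' | B ω' = b ∧ Y ω' ∈ T a}
  set g : α × β → ℝ := fun v => coverS v.1 v.2 * coverT v.1 v.2 / law p B v.2
  have hg : ∀ v, 0 ≤ g v := fun v =>
    div_nonneg (mul_nonneg (pr_nonneg hp.1 _) (pr_nonneg hp.1 _)) (pr_nonneg hp.1 _)
  have hg1 : ∑ v, g v ≤ 1 := calc
    ∑ v, g v = ∑ b, (∑ a, coverS a b * coverT a b) / law p B b := by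
      rw [Fintype.sum_prod_type, sum_comm]
      simp only [g, sum_div]
    _ ≤ ∑ b, law p B b := sum_le_sum fun b _ =>
      div_le_of_le_mul₀ (pr_nonneg hp.1 _) (pr_nonneg hp.1 _) (sum_pr_mul_pr_le hp.1 hST b)
    _ = 1 := sum_law hp B
  have hcover : ∀ ω, 0 < p ω → 0 < coverS (A ω) (B ω) ∧ 0 < coverT (A ω) (B ω) := fun ω hω =>
    ⟨hω.trans_le (le_pr hp.1 ⟨rfl, hS ω hω⟩), hω.trans_le (le_pr hp.1 ⟨rfl, hT ω hω⟩)⟩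
  have hgV : ∀ ω, 0 < p ω → 0 < g (A ω, B ω) := fun ω hω =>
    div_pos (mul_pos (hcover ω hω).1 (hcover ω hω).2) (law_pos hp.1 _ hω)
  have hgibbs := sum_mul_logb_div_law_nonpos hp (fun ω => (A ω, B ω)) g hg hgV hg1
  suffices h : coverEnt p A B X S + coverEnt p A B Y T - condEnt p A B
      = ∑ ω, p ω * logb 2 (g (A ω, B ω) / law p (fun ω => (A ω, B ω)) (A ω, B ω)) by
    linarith
  rw [condEnt_eq_sum, coverEnt, coverEnt, ← sum_add_distrib, ← sum_sub_distrib]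
  simp only [← mul_add, ← mul_sub]
  refine sum_mul_congr_of_pos hp.1 fun ω hω => ?_
  obtain ⟨hcS, hcT⟩ := hcover ω hω
  have hB : 0 < law p B (B ω) := law_pos hp.1 _ hω
  have hAB : 0 < law p (fun ω => (A ω, B ω)) (A ω, B ω) := law_pos hp.1 _ hω
  simp only [g]
  rw [logb_div hcS.ne' hAB.ne', logb_div hcT.ne' hAB.ne', logb_div (by positivity) hAB.ne',
    logb_div (by positivity) hB.ne', logb_mul hcS.ne' hcT.ne']
  ring

end Cover

end

/-- The [KR11] conditional inequality: if `I(X:Y|A) = 0` and `H(A|X,Y) = 0` then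
`H(A|B,X) + H(A|B,Y) ≤ H(A|B)`. -/
theorem stmt_11 {Ω α β χ υ : Type*}
    [Fintype Ω] [Fintype α] [Fintype β] [Fintype χ] [Fintype υ]
    (p : Ω → ℝ) (hp : IsPMF p)
    (A : Ω → α) (B : Ω → β) (X : Ω → χ) (Y : Ω → υ)
    (h1 : cmi p X Y A = 0)
    (h2 : condEnt p A (fun ω => (X ω, Y ω)) = 0) :
    condEnt p A (fun ω => (B ω, X ω)) + condEnt p A (fun ω => (B ω, Y ω)) ≤
      condEnt p A B := by
  set S : α → Set χ := fun a => {x | 0 < law p (fun ω => (X ω, A ω)) (x, a)}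
  set T : α → Set υ := fun a => {y | 0 < law p (fun ω => (Y ω, A ω)) (y, a)}
  have hS : ∀ ω, 0 < p ω → X ω ∈ S (A ω) := fun ω hω => law_pos hp.1 _ hω
  have hT : ∀ ω, 0 < p ω → Y ω ∈ T (A ω) := fun ω hω => law_pos hp.1 _ hω
  calc _ ≤ coverEnt p A B X S + coverEnt p A B Y T :=
        add_le_add (condEnt_prod_le_coverEnt hp hS) (condEnt_prod_le_coverEnt hp hT)
    _ ≤ condEnt p A B := coverEnt_add_coverEnt_le_condEnt hp hS hT
        fun _ _ _ _ => support_rectangles_disjoint hp h1 h2
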